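/- The function f(ζ) = (Φ(ζ) / (1 - Φ(ζ))) · e^{-2ζ√(2/π)} is strictly increasing on (0, ∞), and f(0) = 1. -/

import Mathlib

/-!
Write `φ = Φ'` and `κ = 2√(2/π) = 4 φ(0)`. The derivative of `Φ/(1-Φ) · e^{-κζ}` has the sign of
`g = φ - κ Φ (1 - Φ)`, so it suffices that `g > 0` on `(0, ∞)`. Now `g' = φ h` with
`h = κ (2Φ - 1) - ζ`, and `h' = 2κφ - 1` decreases on `[0, ∞)` from `4/π - 1 > 0` to negative values.
So `h` rises, then falls; as `h(0) = 0` and `h(2) < 0`, it changes sign exactly once, from `+` to `-`.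
Hence `g` also rises, then falls; as `g(0) = 0` and `g → 0` at infinity, `g` is positive on `(0, ∞)`.
-/

open MeasureTheory ProbabilityTheory

noncomputable def stdNormalCDF (s : ℝ) : ℝ := (gaussianReal 0 1 (Set.Iic s)).toReal

open Set Filter Topology Real

def PosThenNegAt (u : ℝ → ℝ) (x₀ c : ℝ) : Prop :=
  (∀ t ∈ Ioo x₀ c, 0 < u t) ∧ ∀ t, c < t → u t < 0

def RisesThenFalls (k : ℝ → ℝ) (x₀ a : ℝ) : Prop :=
  StrictMonoOn k (Icc x₀ a) ∧ StrictAntiOn k (Ici a)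

section SignChange

variable {k k' p : ℝ → ℝ} {x₀ a : ℝ}

lemma PosThenNegAt.mul_left (h : PosThenNegAt k x₀ a) (hp : ∀ t, 0 < p t) :
    PosThenNegAt (fun t => p t * k t) x₀ a :=
  ⟨fun t ht => mul_pos (hp t) (h.1 t ht), fun t ht => mul_neg_of_pos_of_neg (hp t) (h.2 t ht)⟩

lemma PosThenNegAt.risesThenFalls (h : PosThenNegAt k' x₀ a)
    (hk : ∀ x, HasDerivAt k (k' x) x) : RisesThenFalls k x₀ a := by
  have hc : Continuous k := continuous_iff_continuousAt.2 fun x => (hk x).continuousAt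
  refine ⟨strictMonoOn_of_hasDerivWithinAt_pos (convex_Icc x₀ a) hc.continuousOn
      (fun x _ => (hk x).hasDerivWithinAt) fun x hx => ?_,
    strictAntiOn_of_hasDerivWithinAt_neg (convex_Ici a) hc.continuousOn
      (fun x _ => (hk x).hasDerivWithinAt) fun x hx => ?_⟩
  · exact h.1 x (by rwa [interior_Icc] at hx)
  · exact h.2 x (by rwa [interior_Ici] at hx)

lemma RisesThenFalls.of_strictAntiOn (h : StrictAntiOn k (Ici a)) : RisesThenFalls k a a :=
  ⟨by simp [StrictMonoOn], h⟩

lemma RisesThenFalls.pos_of_le (h : RisesThenFalls k x₀ a) (h0 : 0 ≤ k x₀) {x : ℝ}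
    (hx : x₀ < x) (hxa : x ≤ a) : 0 < k x :=
  h0.trans_lt <| h.1 ⟨le_rfl, hx.le.trans hxa⟩ ⟨hx.le, hxa⟩ hx

lemma RisesThenFalls.exists_posThenNegAt (h : RisesThenFalls k x₀ a) (hk : Continuous k)
    (hxa : x₀ ≤ a) (h0 : 0 ≤ k x₀) {b : ℝ} (hb : x₀ < b) (hkb : k b < 0) :
    ∃ c, a ≤ c ∧ PosThenNegAt k x₀ c := by
  have hab : a < b := lt_of_not_ge fun hba => (h.pos_of_le h0 hb hba).not_gt hkb
  have hka : 0 ≤ k a := by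
    rcases hxa.eq_or_lt with rfl | hxa
    · exact h0
    · exact (h.pos_of_le h0 hxa le_rfl).le
  obtain ⟨c, ⟨hac, -⟩, hkc⟩ :=
    intermediate_value_Icc' hab.le hk.continuousOn ⟨hkb.le, hka⟩
  refine ⟨c, hac, fun t ⟨hxt, htc⟩ => ?_, fun t hct => ?_⟩
  · rcases le_or_gt t a with hta | hat
    · exact h.pos_of_le h0 hxt hta
    · exact hkc ▸ h.2 hat.le hac htc
  · exact hkc ▸ h.2 hac (hac.trans hct.le) hct

lemma RisesThenFalls.pos_of_tendsto (h : RisesThenFalls k x₀ a) (h0 : 0 ≤ k x₀)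
    (hlim : Tendsto k atTop (𝓝 0)) {x : ℝ} (hx : x₀ < x) : 0 < k x := by
  rcases le_or_gt x a with hxa | hax
  · exact h.pos_of_le h0 hx hxa
  have hax' : a ≤ x + 1 := by linarith
  have hlim_le : 0 ≤ k (x + 1) :=
    le_of_tendsto hlim <| eventually_atTop.2 ⟨x + 1, fun y hy =>
      h.2.antitoneOn hax' (hax'.trans hy) hy⟩
  exact hlim_le.trans_lt (h.2 hax.le hax' (by linarith))

end SignChange

noncomputable def stdNormalPDF (x : ℝ) : ℝ := (√(2 * π))⁻¹ * exp (-x ^ 2 / 2)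

lemma gaussianPDFReal_zero_one : gaussianPDFReal 0 1 = stdNormalPDF := by
  ext x
  simp [gaussianPDFReal, stdNormalPDF]

lemma stdNormalPDF_pos (x : ℝ) : 0 < stdNormalPDF x := by
  rw [← gaussianPDFReal_zero_one]
  exact gaussianPDFReal_pos 0 1 x one_ne_zero

lemma continuous_stdNormalPDF : Continuous stdNormalPDF := by
  unfold stdNormalPDF
  fun_prop

lemma integrable_stdNormalPDF : Integrable stdNormalPDF :=
  gaussianPDFReal_zero_one ▸ integrable_gaussianPDFReal 0 1

lemma hasDerivAt_stdNormalPDF (x : ℝ) : HasDerivAt stdNormalPDF (-x * stdNormalPDF x) x := by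
  have h : HasDerivAt (fun x : ℝ => -x ^ 2 / 2) (-x) x :=
    (((hasDerivAt_pow 2 x).neg).div_const 2).congr_deriv (by ring)
  exact ((h.exp).const_mul (√(2 * π))⁻¹).congr_deriv (by unfold stdNormalPDF; ring)

lemma stdNormalPDF_strictAntiOn : StrictAntiOn stdNormalPDF (Ici 0) := by
  intro x hx y hy hxy
  unfold stdNormalPDF
  gcongr

lemma stdNormalCDF_eq_integral (s : ℝ) : stdNormalCDF s = ∫ x in Iic s, stdNormalPDF x := by
  rw [stdNormalCDF, gaussianReal_apply_eq_integral 0 one_ne_zero,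
    ENNReal.toReal_ofReal (integral_nonneg fun x => gaussianPDFReal_nonneg 0 1 x),
    gaussianPDFReal_zero_one]

lemma hasDerivAt_stdNormalCDF (x : ℝ) : HasDerivAt stdNormalCDF (stdNormalPDF x) x := by
  have h : ∀ s, stdNormalCDF s = stdNormalCDF 0 + ∫ t in (0 : ℝ)..s, stdNormalPDF t := by
    intro s
    rw [stdNormalCDF_eq_integral, stdNormalCDF_eq_integral,
      ← intervalIntegral.integral_Iic_sub_Iic integrable_stdNormalPDF.integrableOn
        integrable_stdNormalPDF.integrableOn]
    ring
  rw [funext h]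
  exact (intervalIntegral.integral_hasDerivAt_right
    (continuous_stdNormalPDF.intervalIntegrable 0 x)
    (continuous_stdNormalPDF.stronglyMeasurableAtFilter volume _)
    continuous_stdNormalPDF.continuousAt).const_add _

lemma strictMono_stdNormalCDF : StrictMono stdNormalCDF :=
  strictMono_of_hasDerivAt_pos hasDerivAt_stdNormalCDF stdNormalPDF_pos

lemma stdNormalCDF_le_one (s : ℝ) : stdNormalCDF s ≤ 1 :=
  measureReal_le_one

lemma stdNormalCDF_lt_one (s : ℝ) : stdNormalCDF s < 1 :=
  (strictMono_stdNormalCDF (lt_add_one s)).trans_le (stdNormalCDF_le_one _)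

lemma stdNormalCDF_zero : stdNormalCDF 0 = 1 / 2 := by
  have hsymm : ∫ x in Iic (0 : ℝ), stdNormalPDF x = ∫ x in Ioi (0 : ℝ), stdNormalPDF x := by
    rw [← neg_zero, ← integral_comp_neg_Iic, neg_zero]
    simp [stdNormalPDF]
  have htotal : (∫ x in Iic (0 : ℝ), stdNormalPDF x) + ∫ x in Ioi (0 : ℝ), stdNormalPDF x = 1 := by
    rw [← setIntegral_union (Iic_disjoint_Ioi le_rfl) measurableSet_Ioi
      integrable_stdNormalPDF.integrableOn integrable_stdNormalPDF.integrableOn, Iic_union_Ioi,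
      setIntegral_univ, ← gaussianPDFReal_zero_one, integral_gaussianPDFReal_eq_one 0 one_ne_zero]
  rw [stdNormalCDF_eq_integral]
  linarith

lemma tendsto_stdNormalCDF_atTop : Tendsto stdNormalCDF atTop (𝓝 1) := by
  have h := (ENNReal.tendsto_toReal (measure_ne_top (gaussianReal 0 1) univ)).comp
    (tendsto_measure_Iic_atTop (gaussianReal 0 1))
  rw [measure_univ, ENNReal.toReal_one] at h
  exact h

lemma tendsto_stdNormalPDF_atTop : Tendsto stdNormalPDF atTop (𝓝 0) := by
  have h : Tendsto (fun x : ℝ => -x ^ 2 / 2) atTop atBot := by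
    simp_rw [neg_div]
    exact tendsto_neg_atTop_atBot.comp ((tendsto_pow_atTop two_ne_zero).atTop_div_const two_pos)
  have := (tendsto_exp_atBot.comp h).const_mul (√(2 * π))⁻¹
  rw [mul_zero] at this
  exact this


noncomputable def kappa : ℝ := 2 * √(2 / π)

lemma kappa_eq : kappa = 4 * stdNormalPDF 0 := by
  have hsq : √(2 / π) * √(2 * π) = 2 := by
    rw [← sqrt_mul (by positivity), show 2 / π * (2 * π) = 2 ^ 2 by field_simp,
      sqrt_sq zero_le_two]
  have hpos : 0 < √(2 * π) := by positivity
  simp only [kappa, stdNormalPDF, pow_two, neg_zero, zero_div, mul_zero, exp_zero, mul_one]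
  field_simp
  linarith

lemma kappa_pos : 0 < kappa := by
  rw [kappa_eq]
  exact mul_pos four_pos (stdNormalPDF_pos 0)

lemma kappa_lt_two : kappa < 2 := by
  have : √(2 / π) < 1 := by
    rw [sqrt_lt' one_pos, one_pow, div_lt_one pi_pos]
    linarith [pi_gt_three]
  rw [kappa]
  linarith

noncomputable def gapDerivFactor (x : ℝ) : ℝ := kappa * (2 * stdNormalCDF x - 1) - x

noncomputable def gap (x : ℝ) : ℝ :=
  stdNormalPDF x - kappa * (stdNormalCDF x * (1 - stdNormalCDF x))

lemma hasDerivAt_gapDerivFactor (x : ℝ) :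
    HasDerivAt gapDerivFactor (2 * kappa * stdNormalPDF x - 1) x :=
  (((((hasDerivAt_stdNormalCDF x).const_mul 2).sub_const 1).const_mul kappa).sub
    (hasDerivAt_id x)).congr_deriv (by ring)

lemma hasDerivAt_gap (x : ℝ) : HasDerivAt gap (stdNormalPDF x * gapDerivFactor x) x :=
  ((hasDerivAt_stdNormalPDF x).sub (((hasDerivAt_stdNormalCDF x).mul
    ((hasDerivAt_stdNormalCDF x).const_sub 1)).const_mul kappa)).congr_deriv
    (by unfold gapDerivFactor; ring)

lemma two_mul_kappa_mul_stdNormalPDF (x : ℝ) :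
    2 * kappa * stdNormalPDF x = 4 / π * exp (-x ^ 2 / 2) := by
  have hsq : stdNormalPDF 0 ^ 2 = (2 * π)⁻¹ := by
    simp [stdNormalPDF, mul_pow, inv_pow, pi_pos.le]
  have hx : stdNormalPDF x = stdNormalPDF 0 * exp (-x ^ 2 / 2) := by simp [stdNormalPDF]
  rw [kappa_eq, hx, show 2 * (4 * stdNormalPDF 0) * (stdNormalPDF 0 * exp (-x ^ 2 / 2)) =
    8 * stdNormalPDF 0 ^ 2 * exp (-x ^ 2 / 2) by ring, hsq]
  field_simp
  ring

lemma exists_posThenNegAt_deriv_gapDerivFactor :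
    ∃ c, 0 ≤ c ∧ PosThenNegAt (fun x => 2 * kappa * stdNormalPDF x - 1) 0 c := by
  have hanti : StrictAntiOn (fun x => 2 * kappa * stdNormalPDF x - 1) (Ici 0) :=
    fun x hx y hy hxy => sub_lt_sub_right
      (mul_lt_mul_of_pos_left (stdNormalPDF_strictAntiOn hx hy hxy) (by linarith [kappa_pos])) 1
  have hcont : Continuous fun x => 2 * kappa * stdNormalPDF x - 1 := by
    have := continuous_stdNormalPDF
    fun_prop
  have h0 : 0 ≤ 2 * kappa * stdNormalPDF 0 - 1 := by
    rw [two_mul_kappa_mul_stdNormalPDF, sub_nonneg]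
    norm_num [le_div_iff₀ pi_pos, pi_lt_four.le]
  have h2 : 2 * kappa * stdNormalPDF 2 - 1 < 0 := by
    have hexp : 3 ≤ exp 2 := by linarith [add_one_le_exp 2]
    rw [two_mul_kappa_mul_stdNormalPDF, sub_neg, show -(2 : ℝ) ^ 2 / 2 = -2 by norm_num, exp_neg,
      div_mul_eq_mul_div, div_lt_one pi_pos, ← div_eq_mul_inv, div_lt_iff₀ (exp_pos 2)]
    nlinarith [pi_gt_three]
  exact (RisesThenFalls.of_strictAntiOn hanti).exists_posThenNegAt hcont le_rfl h0 two_pos h2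

lemma exists_posThenNegAt_gapDerivFactor : ∃ c, PosThenNegAt gapDerivFactor 0 c := by
  obtain ⟨a, ha, hsign⟩ := exists_posThenNegAt_deriv_gapDerivFactor
  have hcont : Continuous gapDerivFactor :=
    continuous_iff_continuousAt.2 fun x => (hasDerivAt_gapDerivFactor x).continuousAt
  have h0 : gapDerivFactor 0 = 0 := by simp [gapDerivFactor, stdNormalCDF_zero]
  have h2 : gapDerivFactor 2 < 0 := by
    have := stdNormalCDF_le_one 2
    have := kappa_pos
    unfold gapDerivFactor
    nlinarith [kappa_lt_two]
  obtain ⟨c, -, hc⟩ := (hsign.risesThenFalls hasDerivAt_gapDerivFactor).exists_posThenNegAt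
    hcont ha h0.ge two_pos h2
  exact ⟨c, hc⟩

lemma gap_zero : gap 0 = 0 := by
  simp only [gap, stdNormalCDF_zero, kappa_eq]
  ring

lemma tendsto_gap_atTop : Tendsto gap atTop (𝓝 0) := by
  have h : Tendsto gap atTop (𝓝 (0 - kappa * (1 * (1 - 1)))) :=
    tendsto_stdNormalPDF_atTop.sub ((tendsto_stdNormalCDF_atTop.mul
      (tendsto_stdNormalCDF_atTop.const_sub 1)).const_mul kappa)
  simpa using h

lemma gap_pos {x : ℝ} (hx : 0 < x) : 0 < gap x := by
  obtain ⟨c, hc⟩ := exists_posThenNegAt_gapDerivFactor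
  exact ((hc.mul_left stdNormalPDF_pos).risesThenFalls hasDerivAt_gap).pos_of_tendsto
    gap_zero.ge tendsto_gap_atTop hx

lemma hasDerivAt_cdfOdds_mul_exp (c x : ℝ) :
    HasDerivAt (fun ζ => stdNormalCDF ζ / (1 - stdNormalCDF ζ) * exp (-c * ζ))
      (exp (-c * x) * (stdNormalPDF x - c * (stdNormalCDF x * (1 - stdNormalCDF x))) /
        (1 - stdNormalCDF x) ^ 2) x := by
  have hne : 1 - stdNormalCDF x ≠ 0 := (sub_pos.2 (stdNormalCDF_lt_one x)).ne'
  have hodds := (hasDerivAt_stdNormalCDF x).div ((hasDerivAt_stdNormalCDF x).const_sub 1) hne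
  have hexp := ((hasDerivAt_id' x).const_mul (-c)).exp
  refine (hodds.mul hexp).congr_deriv ?_
  simp only [Pi.div_apply]
  field_simp
  ring

/-- The function `f(ζ) = (Φ(ζ)/(1-Φ(ζ))) e^{-2ζ√(2/π)}` is strictly increasing on
`(0, ∞)`, and `f(0) = 1`. -/
theorem stmt_14 :
    StrictMonoOn
      (fun ζ : ℝ => (stdNormalCDF ζ / (1 - stdNormalCDF ζ)) *
        Real.exp (-2 * ζ * Real.sqrt (2 / Real.pi))) (Set.Ioi (0 : ℝ)) ∧
    (stdNormalCDF 0 / (1 - stdNormalCDF 0)) * Real.exp (-2 * 0 * Real.sqrt (2 / Real.pi)) = 1 := by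
  refine ⟨?_, by norm_num [stdNormalCDF_zero]⟩
  have hexp : ∀ ζ : ℝ, -2 * ζ * √(2 / π) = -kappa * ζ := fun ζ => by rw [kappa]; ring
  simp_rw [hexp]
  have hderiv := hasDerivAt_cdfOdds_mul_exp kappa
  refine strictMonoOn_of_hasDerivWithinAt_pos (convex_Ioi 0)
    (fun x _ => (hderiv x).continuousAt.continuousWithinAt)
    (fun x _ => (hderiv x).hasDerivWithinAt) fun x hx => ?_
  rw [interior_Ioi] at hx
  exact div_pos (mul_pos (exp_pos _) (gap_pos hx)) (pow_pos (sub_pos.2 (stdNormalCDF_lt_one x)) 2)
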